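/- Let ς:H⊗H→A be a k-linear map such that ρ and ς satisfy conditions (2), (4), (11) and (17)–(22), and let ς̄:H⊗H→A satisfy conditions (23) and (24). Then ς̄(h⊗k) = ς̄(h⁽¹⁾⊗k⁽¹⁾)(h⁽²⁾k⁽²⁾·1_A) for all h,k ∈ H. -/

import Mathlib

open scoped TensorProduct

/-- The data of a weak bialgebra structure (together with an antipode and its
inverse) on a `k`-algebra `H`: a comultiplication `Δ`, a counit `ε`, an
antipode `S` and its inverse `Sinv`. -/
structure WeakHopfData (k H : Type*) [Field k] [Ring H] [Algebra k H] where
  Δ : H →ₗ[k] H ⊗[k] H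
  ε : H →ₗ[k] k
  S : H →ₗ[k] H
  Sinv : H →ₗ[k] H

section

variable {k H A : Type*} [Field k] [Ring H] [Algebra k H] [Ring A] [Algebra k A]

/-- `Π^L(h) = ε(1⁽¹⁾h)1⁽²⁾`. -/
noncomputable def piL (W : WeakHopfData k H) (h : H) : H :=
  (TensorProduct.lid k H) ((LinearMap.rTensor H (W.ε ∘ₗ LinearMap.mulRight k h)) (W.Δ 1))

/-- `Π^R(h) = 1⁽¹⁾ε(h1⁽²⁾)`. -/
noncomputable def piR (W : WeakHopfData k H) (h : H) : H :=
  (TensorProduct.rid k H) ((LinearMap.lTensor H (W.ε ∘ₗ LinearMap.mulLeft k h)) (W.Δ 1))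

/-- `H^L = im(Π^L)`. -/
def HL (W : WeakHopfData k H) : Set H := Set.range (piL W)

/-- `H^R = im(Π^R)`. -/
def HR (W : WeakHopfData k H) : Set H := Set.range (piR W)

/-- The axioms of a weak Hopf algebra with bijective antipode, where Sweedler
sums are expressed via arbitrary finite representations of the comultiplication. -/
structure IsWeakHopf (W : WeakHopfData k H) : Prop where
  coassoc : ∀ h : H,
    (TensorProduct.assoc k H H H) ((LinearMap.rTensor H W.Δ) (W.Δ h)) =
      (LinearMap.lTensor H W.Δ) (W.Δ h)
  counit_left : ∀ h : H, (TensorProduct.lid k H) ((LinearMap.rTensor H W.ε) (W.Δ h)) = h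
  counit_right : ∀ h : H, (TensorProduct.rid k H) ((LinearMap.lTensor H W.ε) (W.Δ h)) = h
  comul_mul : ∀ h l : H, W.Δ (h * l) = W.Δ h * W.Δ l
  weak_comul_one₁ : (LinearMap.lTensor H W.Δ) (W.Δ 1) =
    (TensorProduct.assoc k H H H) (W.Δ 1 ⊗ₜ[k] (1 : H)) * ((1 : H) ⊗ₜ[k] W.Δ 1)
  weak_comul_one₂ : (LinearMap.lTensor H W.Δ) (W.Δ 1) =
    ((1 : H) ⊗ₜ[k] W.Δ 1) * (TensorProduct.assoc k H H H) (W.Δ 1 ⊗ₜ[k] (1 : H))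
  weak_counit : ∀ h l m : H, ∀ (n : ℕ) (x y : Fin n → H),
    W.Δ l = ∑ i, x i ⊗ₜ[k] y i →
      W.ε (h * l * m) = ∑ i, W.ε (h * x i) * W.ε (y i * m) ∧
      W.ε (h * l * m) = ∑ i, W.ε (h * y i) * W.ε (x i * m)
  antipode_left : ∀ h : H, ∀ (n : ℕ) (x y : Fin n → H),
    W.Δ h = ∑ i, x i ⊗ₜ[k] y i → ∑ i, x i * W.S (y i) = piL W h
  antipode_right : ∀ h : H, ∀ (n : ℕ) (x y : Fin n → H),
    W.Δ h = ∑ i, x i ⊗ₜ[k] y i → ∑ i, W.S (x i) * y i = piR W h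
  antipode_mid : ∀ h : H, ∀ (n : ℕ) (x y : Fin n → H),
    W.Δ h = ∑ i, x i ⊗ₜ[k] y i →
      ∀ (m : Fin n → ℕ) (u v : (i : Fin n) → Fin (m i) → H),
        (∀ i, W.Δ (y i) = ∑ j, u i j ⊗ₜ[k] v i j) →
          ∑ i, ∑ j, W.S (x i) * u i j * W.S (v i j) = W.S h
  S_Sinv : ∀ h : H, W.S (W.Sinv h) = h
  Sinv_S : ∀ h : H, W.Sinv (W.S h) = h

/-- Condition (1): `h·1_A = Π^L(h)·1_A`. -/
def cond1 (W : WeakHopfData k H) (ρ : H →ₗ[k] A →ₗ[k] A) : Prop :=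
  ∀ h : H, ρ h 1 = ρ (piL W h) 1

/-- Condition (2): `h·(aa') = (h⁽¹⁾·a)(h⁽²⁾·a')`. -/
def cond2 (W : WeakHopfData k H) (ρ : H →ₗ[k] A →ₗ[k] A) : Prop :=
  ∀ (h : H) (a a' : A) (n : ℕ) (x y : Fin n → H),
    W.Δ h = ∑ i, x i ⊗ₜ[k] y i → ρ h (a * a') = ∑ i, ρ (x i) a * ρ (y i) a'

/-- Condition (3): `S⁻¹(l)h·a = (h·a)(l·1_A)` and `lh·a = (l·1_A)(h·a)` for `l ∈ H^L`. -/
def cond3 (W : WeakHopfData k H) (ρ : H →ₗ[k] A →ₗ[k] A) : Prop :=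
  ∀ (h : H) (a : A), ∀ l ∈ HL W,
    ρ (W.Sinv l * h) a = ρ h a * ρ l 1 ∧ ρ (l * h) a = ρ l 1 * ρ h a

/-- Condition (4): `1·a = a`. -/
def cond4 (ρ : H →ₗ[k] A →ₗ[k] A) : Prop := ∀ a : A, ρ 1 a = a

/-- Condition (5). -/
def cond5 (W : WeakHopfData k H) (ρ : H →ₗ[k] A →ₗ[k] A) (σ : H → H → A) : Prop :=
  ∀ (h g : H), ∀ l ∈ HL W,
    σ (l * h) g = ρ l 1 * σ h g ∧ σ (W.Sinv l * h) g = σ h g * ρ l 1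

/-- Condition (6): `(h⁽¹⁾·(l·1_A))σ(h⁽²⁾,k) = σ(h,lk)` for `l ∈ H^L`. -/
def cond6 (W : WeakHopfData k H) (ρ : H →ₗ[k] A →ₗ[k] A) (σ : H → H → A) : Prop :=
  ∀ (h g : H), ∀ l ∈ HL W, ∀ (n : ℕ) (x y : Fin n → H),
    W.Δ h = ∑ i, x i ⊗ₜ[k] y i →
      ∑ i, ρ (x i) (ρ l 1) * σ (y i) g = σ h (l * g)

/-- Condition (7): `σ(1,h) = σ(h,1) = h·1_A`. -/
def cond7 (ρ : H →ₗ[k] A →ₗ[k] A) (σ : H → H → A) : Prop :=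
  ∀ h : H, σ 1 h = ρ h 1 ∧ σ h 1 = ρ h 1

/-- Condition (8), the cocycle condition. -/
def cond8 (W : WeakHopfData k H) (ρ : H →ₗ[k] A →ₗ[k] A) (σ : H → H → A) : Prop :=
  ∀ (h g m : H) (n₁ : ℕ) (x₁ y₁ : Fin n₁ → H) (n₂ : ℕ) (x₂ y₂ : Fin n₂ → H)
    (n₃ : ℕ) (x₃ y₃ : Fin n₃ → H),
    W.Δ h = ∑ i, x₁ i ⊗ₜ[k] y₁ i → W.Δ g = ∑ i, x₂ i ⊗ₜ[k] y₂ i →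
    W.Δ m = ∑ i, x₃ i ⊗ₜ[k] y₃ i →
      ∑ i, ∑ j, ∑ p, ρ (x₁ i) (σ (x₂ j) (x₃ p)) * σ (y₁ i) (y₂ j * y₃ p) =
        ∑ i, ∑ j, σ (x₁ i) (x₂ j) * σ (y₁ i * y₂ j) m

/-- Condition (9), the twisted module condition. -/
def cond9 (W : WeakHopfData k H) (ρ : H →ₗ[k] A →ₗ[k] A) (σ : H → H → A) : Prop :=
  ∀ (h g : H) (a : A) (n : ℕ) (x y : Fin n → H) (m : ℕ) (u v : Fin m → H),
    W.Δ h = ∑ i, x i ⊗ₜ[k] y i → W.Δ g = ∑ j, u j ⊗ₜ[k] v j →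
      ∑ i, ∑ j, ρ (x i) (ρ (u j) a) * σ (y i) (v j) =
        ∑ i, ∑ j, σ (x i) (u j) * ρ (y i * v j) a

/-- Condition (10): `h·(l·1_A) = hl·1_A` for `l ∈ H^L`. -/
def cond10 (W : WeakHopfData k H) (ρ : H →ₗ[k] A →ₗ[k] A) : Prop :=
  ∀ h : H, ∀ l ∈ HL W, ρ h (ρ l 1) = ρ (h * l) 1

/-- Condition (11): `h·(l·1_A) = hl·1_A` for all `h, l ∈ H`. -/
def cond11 (ρ : H →ₗ[k] A →ₗ[k] A) : Prop :=
  ∀ h l : H, ρ h (ρ l 1) = ρ (h * l) 1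

/-- Condition (12): `σ(h,l) = σ(hl,1)` for `l ∈ H^L`. -/
def cond12 (W : WeakHopfData k H) (σ : H → H → A) : Prop :=
  ∀ h : H, ∀ l ∈ HL W, σ h l = σ (h * l) 1

/-- Condition (13). -/
def cond13 (W : WeakHopfData k H) (ρ : H →ₗ[k] A →ₗ[k] A) (σbar : H → H → A) : Prop :=
  ∀ (h g : H) (n : ℕ) (x y : Fin n → H) (m : ℕ) (u v : Fin m → H),
    W.Δ h = ∑ i, x i ⊗ₜ[k] y i → W.Δ g = ∑ j, u j ⊗ₜ[k] v j →
      σbar h g = ∑ i, ∑ j, ρ (x i * u j) 1 * σbar (y i) (v j)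

/-- Condition (14). -/
def cond14 (W : WeakHopfData k H) (ρ : H →ₗ[k] A →ₗ[k] A) (σbar : H → H → A) : Prop :=
  ∀ (h g : H), ∀ l ∈ HL W,
    σbar (l * h) g = ρ l 1 * σbar h g ∧ σbar (W.Sinv l * h) g = σbar h g * ρ l 1

/-- Condition (15). -/
def cond15 (W : WeakHopfData k H) (ρ : H →ₗ[k] A →ₗ[k] A) (σbar : H → H → A) : Prop :=
  ∀ (h g : H), ∀ l ∈ HL W, ∀ (n : ℕ) (x y : Fin n → H),
    W.Δ h = ∑ i, x i ⊗ₜ[k] y i →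
      ∑ i, σbar (x i) g * ρ (y i) (ρ l 1) = σbar h (W.Sinv l * g)

/-- Condition (16). -/
def cond16 (W : WeakHopfData k H) (ρ : H →ₗ[k] A →ₗ[k] A) (σ σbar : H → H → A) : Prop :=
  ∀ (h g : H) (n : ℕ) (x y : Fin n → H) (m : ℕ) (u v : Fin m → H),
    W.Δ h = ∑ i, x i ⊗ₜ[k] y i → W.Δ g = ∑ j, u j ⊗ₜ[k] v j →
      (∑ i, ∑ j, σ (x i) (u j) * σbar (y i) (v j) = ρ h (ρ g 1)) ∧
      (∑ i, ∑ j, σbar (x i) (u j) * σ (y i) (v j) = ρ (h * g) 1)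

/-- Condition (17), the cocycle condition for `ς : H ⊗ H → A`. -/
def cond17 (W : WeakHopfData k H) (ρ : H →ₗ[k] A →ₗ[k] A) (ς : H ⊗[k] H → A) : Prop :=
  ∀ (h g m : H) (n₁ : ℕ) (x₁ y₁ : Fin n₁ → H) (n₂ : ℕ) (x₂ y₂ : Fin n₂ → H)
    (n₃ : ℕ) (x₃ y₃ : Fin n₃ → H),
    W.Δ h = ∑ i, x₁ i ⊗ₜ[k] y₁ i → W.Δ g = ∑ i, x₂ i ⊗ₜ[k] y₂ i →
    W.Δ m = ∑ i, x₃ i ⊗ₜ[k] y₃ i →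
      ∑ i, ∑ j, ∑ p, ρ (x₁ i) (ς (x₂ j ⊗ₜ[k] x₃ p)) * ς (y₁ i ⊗ₜ[k] (y₂ j * y₃ p)) =
        ∑ i, ∑ j, ς (x₁ i ⊗ₜ[k] x₂ j) * ς ((y₁ i * y₂ j) ⊗ₜ[k] m)

/-- Condition (18), the twisted module condition for `ς : H ⊗ H → A`. -/
def cond18 (W : WeakHopfData k H) (ρ : H →ₗ[k] A →ₗ[k] A) (ς : H ⊗[k] H → A) : Prop :=
  ∀ (h g : H) (a : A) (n : ℕ) (x y : Fin n → H) (m : ℕ) (u v : Fin m → H),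
    W.Δ h = ∑ i, x i ⊗ₜ[k] y i → W.Δ g = ∑ j, u j ⊗ₜ[k] v j →
      ∑ i, ∑ j, ρ (x i) (ρ (u j) a) * ς (y i ⊗ₜ[k] v j) =
        ∑ i, ∑ j, ς (x i ⊗ₜ[k] u j) * ρ (y i * v j) a

/-- Condition (19). -/
def cond19 (W : WeakHopfData k H) (ρ : H →ₗ[k] A →ₗ[k] A) (ς : H ⊗[k] H → A) : Prop :=
  ∀ (h g : H) (n : ℕ) (x y : Fin n → H) (m : ℕ) (u v : Fin m → H),
    W.Δ h = ∑ i, x i ⊗ₜ[k] y i → W.Δ g = ∑ j, u j ⊗ₜ[k] v j →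
      ς (h ⊗ₜ[k] g) = ∑ i, ∑ j, ς (x i ⊗ₜ[k] u j) * ρ (y i * v j) 1

/-- Condition (20). -/
def cond20 (W : WeakHopfData k H) (ρ : H →ₗ[k] A →ₗ[k] A) (ς : H ⊗[k] H → A) : Prop :=
  ∀ (h : H) (n : ℕ) (x y : Fin n → H) (m : ℕ) (u v : Fin m → H),
    W.Δ h = ∑ i, x i ⊗ₜ[k] y i → W.Δ 1 = ∑ j, u j ⊗ₜ[k] v j →
      ρ h 1 = ∑ i, ∑ j, ρ (x i) (ρ (u j) 1) * ς (y i ⊗ₜ[k] v j)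

/-- Condition (21). -/
def cond21 (W : WeakHopfData k H) (ρ : H →ₗ[k] A →ₗ[k] A) (ς : H ⊗[k] H → A) : Prop :=
  ∀ (h : H) (m : ℕ) (u v : Fin m → H),
    W.Δ 1 = ∑ j, u j ⊗ₜ[k] v j →
      ρ h 1 = ∑ j, ρ (u j) 1 * ς (v j ⊗ₜ[k] h)

/-- Condition (22): `a(1⁽¹⁾·1_A) ⊗ 1⁽²⁾ = (1⁽¹⁾·a) ⊗ 1⁽²⁾` in `A ⊗ H`. -/
def cond22 (W : WeakHopfData k H) (ρ : H →ₗ[k] A →ₗ[k] A) : Prop :=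
  ∀ (a : A) (m : ℕ) (u v : Fin m → H),
    W.Δ 1 = ∑ j, u j ⊗ₜ[k] v j →
      (∑ j, (a * ρ (u j) 1) ⊗ₜ[k] v j) = ∑ j, (ρ (u j) a) ⊗ₜ[k] v j

/-- Condition (23). -/
def cond23 (W : WeakHopfData k H) (ρ : H →ₗ[k] A →ₗ[k] A) (ςbar : H ⊗[k] H → A) : Prop :=
  ∀ (h g : H) (n : ℕ) (x y : Fin n → H) (m : ℕ) (u v : Fin m → H),
    W.Δ h = ∑ i, x i ⊗ₜ[k] y i → W.Δ g = ∑ j, u j ⊗ₜ[k] v j →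
      ςbar (h ⊗ₜ[k] g) = ∑ i, ∑ j, ρ (x i * u j) 1 * ςbar (y i ⊗ₜ[k] v j)

/-- Condition (24). -/
def cond24 (W : WeakHopfData k H) (ρ : H →ₗ[k] A →ₗ[k] A) (ς ςbar : H ⊗[k] H → A) : Prop :=
  ∀ (h g : H) (n : ℕ) (x y : Fin n → H) (m : ℕ) (u v : Fin m → H),
    W.Δ h = ∑ i, x i ⊗ₜ[k] y i → W.Δ g = ∑ j, u j ⊗ₜ[k] v j →
      (∑ i, ∑ j, ς (x i ⊗ₜ[k] u j) * ςbar (y i ⊗ₜ[k] v j) = ρ (h * g) 1) ∧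
      (∑ i, ∑ j, ςbar (x i ⊗ₜ[k] u j) * ς (y i ⊗ₜ[k] v j) = ρ (h * g) 1)

/-- `σ` is `H^R`-balanced: `σ(hr,k) = σ(h,rk)` for `r ∈ H^R`. -/
def HRBalanced (W : WeakHopfData k H) (σ : H → H → A) : Prop :=
  ∀ (h g : H), ∀ r ∈ HR W, σ (h * r) g = σ h (r * g)

/-- `σbar` is `H^L`-balanced: `σbar(hl,k) = σbar(h,lk)` for `l ∈ H^L`. -/
def HLBalanced (W : WeakHopfData k H) (σbar : H → H → A) : Prop :=
  ∀ (h g : H), ∀ l ∈ HL W, σbar (h * l) g = σbar h (l * g)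

/-- The idempotent `∇ρ : A ⊗ H → A ⊗ H`, `a ⊗ h ↦ a(h⁽¹⁾·1_A) ⊗ h⁽²⁾`. -/
noncomputable def nabla (W : WeakHopfData k H) (ρ : H →ₗ[k] A →ₗ[k] A) :
    A ⊗[k] H →ₗ[k] A ⊗[k] H :=
  (LinearMap.rTensor H (LinearMap.mul' k A ∘ₗ LinearMap.lTensor A (ρ.flip 1))) ∘ₗ
    (TensorProduct.assoc k A H H).symm.toLinearMap ∘ₗ LinearMap.lTensor A W.Δ

/-- The subspace `N` of `A ⊗ H` spanned by the elements
`a(l·1_A) ⊗ h - a ⊗ lh` with `l ∈ H^L`, so that `(A ⊗ H)/N = A ⊗_{H^L} H`. -/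
def relN (W : WeakHopfData k H) (ρ : H →ₗ[k] A →ₗ[k] A) : Submodule k (A ⊗[k] H) :=
  Submodule.span k
    {z | ∃ (a : A) (l h : H), l ∈ HL W ∧ z = (a * ρ l 1) ⊗ₜ[k] h - a ⊗ₜ[k] (l * h)}

/-- The map `σ̃(h,k) := (h⁽¹⁾k⁽¹⁾·1_A)σ̄(h⁽²⁾,k⁽²⁾)`. -/
noncomputable def sigmaTilde (W : WeakHopfData k H) (ρ : H →ₗ[k] A →ₗ[k] A)
    (σbar : H →ₗ[k] H →ₗ[k] A) : H → H → A := fun h g =>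
  LinearMap.mul' k A
    ((TensorProduct.map ((ρ.flip 1) ∘ₗ LinearMap.mul' k H) (TensorProduct.lift σbar))
      ((TensorProduct.tensorTensorTensorComm k H H H H) (W.Δ h ⊗ₜ[k] W.Δ g)))

end

/-! Writing `⋆` for convolution on linear maps `H ⊗ H → A` and `u(h ⊗ k) = hk·1_A`, conditions
(23) and (24) say `ς̄ = u ⋆ ς̄` and `ς ⋆ ς̄ = ς̄ ⋆ ς = u`. Convolution is associative because `Δ` is
coassociative, so `ς̄ = (ς̄ ⋆ ς) ⋆ ς̄ = ς̄ ⋆ (ς ⋆ ς̄) = ς̄ ⋆ u`, which is the claim. -/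

open Coalgebra TensorProduct WithConv

theorem TensorProduct.exists_eq_sum_fin_tmul {k M N : Type*} [CommSemiring k] [AddCommMonoid M]
    [Module k M] [AddCommMonoid N] [Module k N] (z : M ⊗[k] N) :
    ∃ (n : ℕ) (x : Fin n → M) (y : Fin n → N), z = ∑ i, x i ⊗ₜ[k] y i := by
  obtain ⟨S, rfl⟩ := TensorProduct.exists_finset z
  refine ⟨S.card, fun i => (S.equivFin.symm i : M × N).1,
    fun i => (S.equivFin.symm i : M × N).2, ?_⟩
  rw [← Finset.sum_coe_sort S (fun p => p.1 ⊗ₜ[k] p.2), ← Equiv.sum_comp S.equivFin.symm]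

noncomputable abbrev IsWeakHopf.toCoalgebra {k H : Type*} [Field k] [Ring H] [Algebra k H]
    {W : WeakHopfData k H} (hW : IsWeakHopf W) : Coalgebra k H where
  comul := W.Δ
  counit := W.ε
  coassoc := LinearMap.ext hW.coassoc
  rTensor_counit_comp_comul := LinearMap.ext fun h => by
    simpa using congrArg (TensorProduct.lid k H).symm (hW.counit_left h)
  lTensor_counit_comp_comul := LinearMap.ext fun h => by
    simpa using congrArg (TensorProduct.rid k H).symm (hW.counit_right h)

section Convolution

variable {k H A : Type*} [CommSemiring k] [AddCommMonoid H] [Module k H] [Coalgebra k H]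
  [Semiring A] [Algebra k A]

theorem convMul_tmul_eq_sum (f f' : WithConv (H ⊗[k] H →ₗ[k] A)) {h g : H} {n m : ℕ}
    {x y : Fin n → H} {u v : Fin m → H} (hx : comul h = ∑ i, x i ⊗ₜ[k] y i)
    (hu : comul g = ∑ j, u j ⊗ₜ[k] v j) :
    (f * f') (h ⊗ₜ[k] g) = ∑ i, ∑ j, f (x i ⊗ₜ[k] u j) * f' (y i ⊗ₜ[k] v j) := by
  simp only [LinearMap.convMul_apply, comul_tmul, hx, hu, sum_tmul, tmul_sum, map_sum,
    AlgebraTensorModule.tensorTensorTensorComm_tmul, TensorProduct.map_tmul, LinearMap.mul'_apply]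
  exact Finset.sum_comm

theorem convMul_eq_of_forall_sum {f f' : WithConv (H ⊗[k] H →ₗ[k] A)} {F : H ⊗[k] H →ₗ[k] A}
    (hF : ∀ (h g : H) (n : ℕ) (x y : Fin n → H) (m : ℕ) (u v : Fin m → H),
      comul h = ∑ i, x i ⊗ₜ[k] y i → comul g = ∑ j, u j ⊗ₜ[k] v j →
        ∑ i, ∑ j, f (x i ⊗ₜ[k] u j) * f' (y i ⊗ₜ[k] v j) = F (h ⊗ₜ[k] g)) :
    f * f' = toConv F := by
  refine ofConv_injective (TensorProduct.ext' fun h g => ?_)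
  obtain ⟨n, x, y, hx⟩ := TensorProduct.exists_eq_sum_fin_tmul (comul (R := k) h)
  obtain ⟨m, u, v, hu⟩ := TensorProduct.exists_eq_sum_fin_tmul (comul (R := k) g)
  exact (convMul_tmul_eq_sum f f' hx hu).trans (hF h g n x y m u v hx hu)

end Convolution

theorem statement14_general {k H A : Type*} [Field k] [Ring H] [Algebra k H] [Ring A] [Algebra k A]
    (W : WeakHopfData k H) (hW : IsWeakHopf W) (ρ : H →ₗ[k] A →ₗ[k] A)
    (ς : H ⊗[k] H →ₗ[k] A) (ςbar : H ⊗[k] H →ₗ[k] A)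
    (h23 : cond23 W ρ ⇑ςbar) (h24 : cond24 W ρ ⇑ς ⇑ςbar) :
    ∀ (h g : H) (n : ℕ) (x y : Fin n → H) (m : ℕ) (u v : Fin m → H),
      W.Δ h = ∑ i, x i ⊗ₜ[k] y i → W.Δ g = ∑ j, u j ⊗ₜ[k] v j →
        ςbar (h ⊗ₜ[k] g) = ∑ i, ∑ j, ςbar (x i ⊗ₜ[k] u j) * ρ (y i * v j) 1 := by
  intro h g n x y m u v hx hu
  let := hW.toCoalgebra
  let unit : WithConv (H ⊗[k] H →ₗ[k] A) := toConv ((ρ.flip 1) ∘ₗ LinearMap.mul' k H)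
  have unit_mul : unit * toConv ςbar = toConv ςbar :=
    convMul_eq_of_forall_sum fun h g _ _ _ _ _ _ hx hu => (h23 h g _ _ _ _ _ _ hx hu).symm
  have ς_mul_ςbar : toConv ς * toConv ςbar = unit :=
    convMul_eq_of_forall_sum fun h g _ _ _ _ _ _ hx hu => (h24 h g _ _ _ _ _ _ hx hu).1
  have ςbar_mul_ς : toConv ςbar * toConv ς = unit :=
    convMul_eq_of_forall_sum fun h g _ _ _ _ _ _ hx hu => (h24 h g _ _ _ _ _ _ hx hu).2
  have mul_unit : toConv ςbar * unit = toConv ςbar := by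
    rw [← ς_mul_ςbar, ← mul_assoc, ςbar_mul_ς, unit_mul]
  calc ςbar (h ⊗ₜ[k] g) = (toConv ςbar * unit) (h ⊗ₜ[k] g) := by rw [mul_unit]
    _ = _ := convMul_tmul_eq_sum _ _ hx hu

/-- under conditions (2), (4), (11), (17)–(22), (23) and (24),
one has `ς̄(h⊗k) = ς̄(h⁽¹⁾⊗k⁽¹⁾)(h⁽²⁾k⁽²⁾·1_A)`. -/
theorem statement14 {k H A : Type*} [Field k] [Ring H] [Algebra k H] [Ring A] [Algebra k A]
    (W : WeakHopfData k H) (hW : IsWeakHopf W) (ρ : H →ₗ[k] A →ₗ[k] A)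
    (ς : H ⊗[k] H →ₗ[k] A) (ςbar : H ⊗[k] H →ₗ[k] A)
    (h2 : cond2 W ρ) (h4 : cond4 ρ) (h11 : cond11 ρ)
    (h17 : cond17 W ρ ⇑ς) (h18 : cond18 W ρ ⇑ς) (h19 : cond19 W ρ ⇑ς)
    (h20 : cond20 W ρ ⇑ς) (h21 : cond21 W ρ ⇑ς) (h22 : cond22 W ρ)
    (h23 : cond23 W ρ ⇑ςbar) (h24 : cond24 W ρ ⇑ς ⇑ςbar) :
    ∀ (h g : H) (n : ℕ) (x y : Fin n → H) (m : ℕ) (u v : Fin m → H),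
      W.Δ h = ∑ i, x i ⊗ₜ[k] y i → W.Δ g = ∑ j, u j ⊗ₜ[k] v j →
        ςbar (h ⊗ₜ[k] g) = ∑ i, ∑ j, ςbar (x i ⊗ₜ[k] u j) * ρ (y i * v j) 1 :=
  statement14_general W hW ρ ς ςbar h23 h24
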